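/- Fix a finite tree t and a constant c > 0. The number of components of G(n, c/n) isomorphic to t, divided by its expectation, converges to 1 in probability as n → ∞; in particular, for every fixed k, with probability tending to 1 the random graph G(n, c/n) contains at least k components isomorphic to t. -/

import Mathlib

open Filter Topology

/-- The probability weight of a specific outcome `g` (a choice of presence/absence for
each potential edge) in the Erdős–Rényi model `G(n,p)`. -/
noncomputable def gnpWeight (n : ℕ) (p : ℝ) (g : Sym2 (Fin n) → Bool) : ℝ :=
  ∏ e : Sym2 (Fin n), (if g e then p else 1 - p)

/-- Expectation of a real-valued graph functional under `G(n,p)`. -/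
noncomputable def gnpExp (n : ℕ) (p : ℝ) (f : (Sym2 (Fin n) → Bool) → ℝ) : ℝ :=
  ∑ g : Sym2 (Fin n) → Bool, gnpWeight n p g * f g

open Classical in
/-- Probability of an event under `G(n,p)`. -/
noncomputable def gnpProb (n : ℕ) (p : ℝ) (A : (Sym2 (Fin n) → Bool) → Prop) : ℝ :=
  gnpExp n p (fun g => if A g then 1 else 0)

/-- The simple graph on `Fin n` determined by an outcome `g`. -/
def graphOf {n : ℕ} (g : Sym2 (Fin n) → Bool) : SimpleGraph (Fin n) where
  Adj i j := i ≠ j ∧ g s(i, j) = true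
  symm := by
    constructor
    intro i j h
    refine ⟨Ne.symm h.1, ?_⟩
    rw [Sym2.eq_swap]
    exact h.2
  loopless := ⟨fun i h => h.1 rfl⟩

/-- `S` induces a connected component of `G` isomorphic to the graph `t`:
the induced subgraph on `S` is a copy of `t` and no edges leave `S`. -/
def IsCompCopy {n ℓ : ℕ} (t : SimpleGraph (Fin ℓ)) (G : SimpleGraph (Fin n))
    (S : Finset (Fin n)) : Prop :=
  (∃ φ : Fin ℓ ↪ Fin n, Set.range φ = ↑S ∧
      ∀ i j, t.Adj i j ↔ G.Adj (φ i) (φ j)) ∧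
  ∀ u ∈ S, ∀ v, G.Adj u v → v ∈ S

/-!
Write `X = ∑ Y_S` over `ℓ`-sets `S`, where `Y_S` indicates that `S` spans a component isomorphic
to `t`. Then `Y_S` is the product of "the edges inside `S` form a copy of `t`" and "no edge
leaves `S`", events depending on disjoint sets of edges and hence independent. For disjoint `S`, `T`
the same factorization gives `E[Y_S] E[Y_T] = E[Y_S Y_T] (1 - p)^d`, where `d ≤ ℓ²` counts the
edges between `S` and `T`; distinct overlapping components cannot coexist because `t` is connected.
Hence `E[X²] ≤ E X + (E X)² + ℓ² p E[X²]`, i.e. `Var X ≤ 2 E X + 2 ℓ² p (E X)²` once `ℓ² p ≤ 1/2`.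
As `t` has `ℓ - 1` edges, `E X ≥ C(n, ℓ) p^(ℓ-1) (1 - p)^(ℓ n)`, which is of order `n` for
`p = c / n`, so Chebyshev's inequality bounds the probability of a relative deviation `ε` by
`(2 / E X + 2 ℓ² p) / ε² → 0`.
-/
open Finset
open scoped Classical

section Expectation

variable {n : ℕ} {p : ℝ}

lemma gnpWeight_nonneg (hp0 : 0 ≤ p) (hp1 : p ≤ 1) (g : Sym2 (Fin n) → Bool) :
    0 ≤ gnpWeight n p g :=
  prod_nonneg fun e _ => by split <;> linarith

lemma gnpExp_add (f h : (Sym2 (Fin n) → Bool) → ℝ) :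
    gnpExp n p (fun g => f g + h g) = gnpExp n p f + gnpExp n p h := by
  simp only [gnpExp, mul_add, sum_add_distrib]

lemma gnpExp_const_mul (a : ℝ) (f : (Sym2 (Fin n) → Bool) → ℝ) :
    gnpExp n p (fun g => a * f g) = a * gnpExp n p f := by
  simp only [gnpExp, mul_sum, mul_left_comm]

lemma gnpExp_sum {ι : Type*} (s : Finset ι) (F : ι → (Sym2 (Fin n) → Bool) → ℝ) :
    gnpExp n p (fun g => ∑ i ∈ s, F i g) = ∑ i ∈ s, gnpExp n p (F i) := by
  simp only [gnpExp, mul_sum]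
  exact sum_comm

lemma gnpExp_mono (hp0 : 0 ≤ p) (hp1 : p ≤ 1) {f h : (Sym2 (Fin n) → Bool) → ℝ}
    (hfh : ∀ g, f g ≤ h g) : gnpExp n p f ≤ gnpExp n p h :=
  sum_le_sum fun g _ => mul_le_mul_of_nonneg_left (hfh g) (gnpWeight_nonneg hp0 hp1 g)

lemma gnpExp_nonneg (hp0 : 0 ≤ p) (hp1 : p ≤ 1) {f : (Sym2 (Fin n) → Bool) → ℝ}
    (hf : ∀ g, 0 ≤ f g) : 0 ≤ gnpExp n p f :=
  sum_nonneg fun g _ => mul_nonneg (gnpWeight_nonneg hp0 hp1 g) (hf g)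

lemma gnpExp_prod (s : Finset (Sym2 (Fin n))) (φ : Sym2 (Fin n) → Bool → ℝ) :
    gnpExp n p (fun g => ∏ e ∈ s, φ e (g e)) =
      ∏ e ∈ s, (p * φ e true + (1 - p) * φ e false) := by
  set ψ : Sym2 (Fin n) → Bool → ℝ :=
    fun e b => (if b then p else 1 - p) * if e ∈ s then φ e b else 1
  have hψ (g : Sym2 (Fin n) → Bool) :
      gnpWeight n p g * ∏ e ∈ s, φ e (g e) = ∏ e, ψ e (g e) := by
    simp only [ψ, gnpWeight, prod_mul_distrib, prod_ite_mem, univ_inter]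
  simp only [gnpExp, hψ]
  rw [← Fintype.prod_sum ψ, ← prod_subset (subset_univ s)]
  · refine prod_congr rfl fun e he => ?_
    simp [ψ, he]
  · intro e _ he
    simp [ψ, he]

lemma gnpExp_const (a : ℝ) : gnpExp n p (fun _ => a) = a := by
  have hone : gnpExp n p (fun _ => 1) = 1 := by
    simpa using gnpExp_prod (n := n) (p := p) ∅ fun _ _ => 1
  simpa [hone] using gnpExp_const_mul (n := n) (p := p) a fun _ => 1

lemma gnpProb_nonneg (hp0 : 0 ≤ p) (hp1 : p ≤ 1) (A : (Sym2 (Fin n) → Bool) → Prop) :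
    0 ≤ gnpProb n p A :=
  gnpExp_nonneg hp0 hp1 fun g => by split <;> norm_num

lemma gnpProb_le_one (hp0 : 0 ≤ p) (hp1 : p ≤ 1) (A : (Sym2 (Fin n) → Bool) → Prop) :
    gnpProb n p A ≤ 1 :=
  calc gnpProb n p A ≤ gnpExp n p (fun _ => 1) :=
        gnpExp_mono hp0 hp1 fun g => by split <;> norm_num
    _ = 1 := gnpExp_const 1

lemma one_le_gnpProb_add (hp0 : 0 ≤ p) (hp1 : p ≤ 1) {A B : (Sym2 (Fin n) → Bool) → Prop}
    (hAB : ∀ g, A g ∨ B g) : 1 ≤ gnpProb n p A + gnpProb n p B :=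
  calc 1 = gnpExp n p (fun _ => 1) := (gnpExp_const 1).symm
    _ ≤ _ := gnpExp_mono hp0 hp1 fun g => by
      rcases hAB g with h | h <;> simp only [h, if_true] <;> split <;> norm_num
    _ = gnpProb n p A + gnpProb n p B := gnpExp_add _ _

lemma gnpExp_sub_gnpExp_sq (f : (Sym2 (Fin n) → Bool) → ℝ) :
    gnpExp n p (fun g => (f g - gnpExp n p f) ^ 2) =
      gnpExp n p (fun g => f g ^ 2) - gnpExp n p f ^ 2 := by
  set E := gnpExp n p f
  have hexpand : (fun g => (f g - E) ^ 2) = fun g => (f g ^ 2 + -2 * E * f g) + E ^ 2 := by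
    ext g; ring
  rw [hexpand, gnpExp_add, gnpExp_add, gnpExp_const_mul, gnpExp_const]
  ring

lemma gnpProb_lt_abs_div_sub_one_le (hp0 : 0 ≤ p) (hp1 : p ≤ 1)
    {f : (Sym2 (Fin n) → Bool) → ℝ} (hE : 0 < gnpExp n p f) {ε : ℝ} (hε : 0 < ε) :
    gnpProb n p (fun g => ε < |f g / gnpExp n p f - 1|) ≤
      (gnpExp n p (fun g => f g ^ 2) - gnpExp n p f ^ 2) / (ε * gnpExp n p f) ^ 2 := by
  set E := gnpExp n p f
  have hpointwise (g : Sym2 (Fin n) → Bool) :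
      (if ε < |f g / E - 1| then (1 : ℝ) else 0) ≤ (ε * E)⁻¹ ^ 2 * (f g - E) ^ 2 := by
    split_ifs with hdev
    · have hlt : ε * E < |f g - E| := by
        rwa [div_sub_one hE.ne', abs_div, abs_of_pos hE, lt_div_iff₀ hE] at hdev
      rw [inv_pow, ← sq_abs (f g - E), inv_mul_eq_div, one_le_div (by positivity)]
      exact pow_le_pow_left₀ (by positivity) hlt.le 2
    · positivity
  calc gnpProb n p (fun g => ε < |f g / E - 1|)
      ≤ gnpExp n p (fun g => (ε * E)⁻¹ ^ 2 * (f g - E) ^ 2) :=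
        gnpExp_mono hp0 hp1 hpointwise
    _ = _ := by rw [gnpExp_const_mul, gnpExp_sub_gnpExp_sq, inv_pow, inv_mul_eq_div]

end Expectation

section Independence

variable {n : ℕ} {p : ℝ}

def cylinderIndicator (A : Finset (Sym2 (Fin n))) (a g : Sym2 (Fin n) → Bool) : ℝ :=
  if ∀ e ∈ A, g e = a e then 1 else 0

lemma gnpExp_cylinderIndicator (A : Finset (Sym2 (Fin n))) (a : Sym2 (Fin n) → Bool) :
    gnpExp n p (cylinderIndicator A a) = ∏ e ∈ A, if a e then p else 1 - p := by
  have hprod : cylinderIndicator A a = fun g => ∏ e ∈ A, if g e = a e then (1 : ℝ) else 0 := by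
    ext g
    simp [cylinderIndicator, prod_boole]
  rw [hprod]
  refine (gnpExp_prod A fun e b => if b = a e then 1 else 0).trans
    (prod_congr rfl fun e _ => ?_)
  cases a e <;> simp

lemma cylinderIndicator_mul_cylinderIndicator {A B : Finset (Sym2 (Fin n))}
    {a b : Sym2 (Fin n) → Bool} (hab : ∀ e ∈ A, e ∈ B → a e = b e) (g : Sym2 (Fin n) → Bool) :
    cylinderIndicator A a g * cylinderIndicator B b g =
      cylinderIndicator (A ∪ B) (A.piecewise a b) g := by
  simp only [cylinderIndicator, ite_zero_mul_ite_zero, mul_one]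
  congr 1
  apply propext
  constructor
  · rintro ⟨ha, hb⟩ e he
    by_cases heA : e ∈ A
    · rw [piecewise_eq_of_mem _ _ _ heA, ha e heA]
    · rw [piecewise_eq_of_notMem _ _ _ heA, hb e ((mem_union.1 he).resolve_left heA)]
  · intro hab'
    refine ⟨fun e he => ?_, fun e he => ?_⟩
    · rw [hab' e (mem_union_left B he), piecewise_eq_of_mem _ _ _ he]
    · by_cases heA : e ∈ A
      · rw [hab' e (mem_union_right A he), piecewise_eq_of_mem _ _ _ heA, hab e heA he]
      · rw [hab' e (mem_union_right A he), piecewise_eq_of_notMem _ _ _ heA]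

lemma gnpExp_cylinderIndicator_mul {A B : Finset (Sym2 (Fin n))} (hAB : Disjoint A B)
    (a b : Sym2 (Fin n) → Bool) :
    gnpExp n p (fun g => cylinderIndicator A a g * cylinderIndicator B b g) =
      gnpExp n p (cylinderIndicator A a) * gnpExp n p (cylinderIndicator B b) := by
  have hab : ∀ e ∈ A, e ∈ B → a e = b e := fun e hA hB => absurd hB (disjoint_left.1 hAB hA)
  simp only [cylinderIndicator_mul_cylinderIndicator hab, gnpExp_cylinderIndicator,
    prod_union hAB]
  congr 1
  · exact prod_congr rfl fun e he => by rw [piecewise_eq_of_mem _ _ _ he]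
  · exact prod_congr rfl fun e he => by
      rw [piecewise_eq_of_notMem _ _ _ (disjoint_right.1 hAB he)]

lemma dependsOn_cylinderIndicator (A : Finset (Sym2 (Fin n))) (a : Sym2 (Fin n) → Bool) :
    DependsOn (cylinderIndicator A a) A := by
  intro g g' hgg'
  simp only [cylinderIndicator]
  congr 1
  exact propext (forall₂_congr fun e he => by rw [hgg' e he])

lemma DependsOn.mul {ι : Type*} {α : ι → Type*} {β : Type*} [Mul β] {f h : (Π i, α i) → β}
    {A B : Set ι} (hf : DependsOn f A) (hh : DependsOn h B) :
    DependsOn (fun x => f x * h x) (A ∪ B) := fun x y hxy => by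
  dsimp only
  rw [hf fun i hi => hxy i (Or.inl hi), hh fun i hi => hxy i (Or.inr hi)]

/-- Each outcome lies in the cylinder of exactly one pattern vanishing off `A`. -/
lemma DependsOn.eq_sum_cylinderIndicator {f : (Sym2 (Fin n) → Bool) → ℝ}
    {A : Finset (Sym2 (Fin n))} (hf : DependsOn f A) (g : Sym2 (Fin n) → Bool) :
    f g = ∑ a ∈ univ.filter (fun a => ∀ e ∉ A, a e = false), f a * cylinderIndicator A a g := by
  set a₀ := A.piecewise g fun _ => false
  have ha₀ : a₀ ∈ univ.filter (fun a => ∀ e ∉ A, a e = false) :=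
    mem_filter.2 ⟨mem_univ _, fun e he => piecewise_eq_of_notMem _ _ _ he⟩
  have hagree : ∀ e ∈ A, g e = a₀ e := fun e he => (piecewise_eq_of_mem _ _ _ he).symm
  rw [sum_eq_single_of_mem a₀ ha₀, cylinderIndicator, if_pos hagree, mul_one]
  · exact hf fun e he => hagree e he
  · intro a ha hne
    rw [cylinderIndicator, if_neg, mul_zero]
    intro hga
    refine hne (funext fun e => ?_)
    by_cases he : e ∈ A
    · rw [← hga e he, hagree e he]
    · rw [(mem_filter.1 ha).2 e he, (mem_filter.1 ha₀).2 e he]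

lemma DependsOn.gnpExp_eq_sum {f : (Sym2 (Fin n) → Bool) → ℝ} {A : Finset (Sym2 (Fin n))}
    (hf : DependsOn f A) :
    gnpExp n p f = ∑ a ∈ univ.filter (fun a => ∀ e ∉ A, a e = false),
      f a * gnpExp n p (cylinderIndicator A a) := by
  conv_lhs => rw [show f = _ from funext hf.eq_sum_cylinderIndicator]
  simp only [gnpExp_sum, gnpExp_const_mul]

theorem gnpExp_mul_of_dependsOn {f h : (Sym2 (Fin n) → Bool) → ℝ}
    {A B : Finset (Sym2 (Fin n))} (hAB : Disjoint A B) (hf : DependsOn f A) (hh : DependsOn h B) :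
    gnpExp n p (fun g => f g * h g) = gnpExp n p f * gnpExp n p h := by
  have hfh (g : Sym2 (Fin n) → Bool) : f g * h g =
      ∑ a ∈ univ.filter (fun a => ∀ e ∉ A, a e = false),
        ∑ b ∈ univ.filter (fun b => ∀ e ∉ B, b e = false),
          f a * h b * (cylinderIndicator A a g * cylinderIndicator B b g) := by
    rw [hf.eq_sum_cylinderIndicator g, hh.eq_sum_cylinderIndicator g, sum_mul_sum]
    exact sum_congr rfl fun a _ => sum_congr rfl fun b _ => by ring
  simp only [hfh, gnpExp_sum, gnpExp_const_mul, gnpExp_cylinderIndicator_mul hAB,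
    hf.gnpExp_eq_sum, hh.gnpExp_eq_sum, sum_mul_sum, mul_mul_mul_comm]

end Independence

section BoundaryEdges

variable {n : ℕ} {S T : Finset (Fin n)}

def boundaryEdges (S : Finset (Fin n)) : Finset (Sym2 (Fin n)) :=
  (S ×ˢ Sᶜ).image Sym2.mk.uncurry

lemma mem_boundaryEdges {e : Sym2 (Fin n)} :
    e ∈ boundaryEdges S ↔ ∃ u ∈ S, ∃ v ∉ S, s(u, v) = e := by
  simp [boundaryEdges]

lemma card_boundaryEdges_inter_le (hST : Disjoint S T) :
    #(boundaryEdges S ∩ boundaryEdges T) ≤ #S * #T := by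
  have hsub : boundaryEdges S ∩ boundaryEdges T ⊆ (S ×ˢ T).image Sym2.mk.uncurry := by
    intro e he
    obtain ⟨⟨u, hu, v, hv, rfl⟩, ⟨u', hu', v', hv', huv⟩⟩ :=
      And.imp mem_boundaryEdges.1 mem_boundaryEdges.1 (mem_inter.1 he)
    rcases Sym2.eq_iff.1 huv with ⟨hu'u, -⟩ | ⟨hu'v, -⟩
    · exact absurd (hu'u ▸ hu') (disjoint_left.1 hST hu)
    · exact mem_image.2 ⟨(u, v), mem_product.2 ⟨hu, hu'v ▸ hu'⟩, rfl⟩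
  calc #(boundaryEdges S ∩ boundaryEdges T)
      ≤ #((S ×ˢ T).image Sym2.mk.uncurry) := card_le_card hsub
    _ ≤ #S * #T := card_image_le.trans_eq (card_product _ _)

lemma disjoint_sym2_boundaryEdges_self (S : Finset (Fin n)) :
    Disjoint S.sym2 (boundaryEdges S) := by
  refine disjoint_left.2 fun e he he' => ?_
  obtain ⟨u, -, v, hv, rfl⟩ := mem_boundaryEdges.1 he'
  exact hv (mk_mem_sym2_iff.1 he).2

lemma Disjoint.sym2_boundaryEdges (hST : Disjoint S T) : Disjoint S.sym2 (boundaryEdges T) := by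
  refine disjoint_left.2 fun e he he' => ?_
  obtain ⟨u, hu, v, -, rfl⟩ := mem_boundaryEdges.1 he'
  exact disjoint_left.1 hST (mk_mem_sym2_iff.1 he).1 hu

lemma Disjoint.sym2 (hST : Disjoint S T) : Disjoint S.sym2 T.sym2 := by
  refine disjoint_left.2 fun e he he' => ?_
  induction e using Sym2.ind with
  | _ u v => exact disjoint_left.1 hST (mk_mem_sym2_iff.1 he).1 (mk_mem_sym2_iff.1 he').1

end BoundaryEdges

section ComponentCopies

variable {n ℓ : ℕ} {t : SimpleGraph (Fin ℓ)} {G : SimpleGraph (Fin n)} {S T : Finset (Fin n)}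

lemma IsCompCopy.card_eq (h : IsCompCopy t G S) : #S = ℓ := by
  obtain ⟨⟨φ, hrange, -⟩, -⟩ := h
  have hS : S = univ.map φ := coe_injective (by simp [hrange])
  simp [hS]

lemma IsCompCopy.subset_of_mem (ht : t.Connected) (hS : IsCompCopy t G S)
    (hT : ∀ u ∈ T, ∀ v, G.Adj u v → v ∈ T) {u : Fin n} (huS : u ∈ S) (huT : u ∈ T) :
    S ⊆ T := by
  obtain ⟨⟨φ, hrange, hadj⟩, -⟩ := hS
  have hwalk {i j : Fin ℓ} (w : t.Walk i j) : φ i ∈ T → φ j ∈ T := by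
    induction w with
    | nil => exact id
    | cons h _ ih => exact fun hi => ih (hT _ hi _ ((hadj _ _).1 h))
  have hmem {v} (hv : v ∈ S) : ∃ i, φ i = v := by
    rwa [← mem_coe, ← hrange] at hv
  intro v hv
  obtain ⟨i, rfl⟩ := hmem huS
  obtain ⟨j, rfl⟩ := hmem hv
  exact hwalk (ht.preconnected i j).some huT

lemma IsCompCopy.eq_of_not_disjoint (ht : t.Connected) (hS : IsCompCopy t G S)
    (hT : IsCompCopy t G T) (hST : ¬Disjoint S T) : S = T := by
  obtain ⟨u, huS, huT⟩ := not_disjoint_iff.1 hST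
  exact (hS.subset_of_mem ht hT.2 huS huT).antisymm (hT.subset_of_mem ht hS.2 huT huS)

lemma closed_graphOf_iff (g : Sym2 (Fin n) → Bool) :
    (∀ u ∈ S, ∀ v, (graphOf g).Adj u v → v ∈ S) ↔ ∀ e ∈ boundaryEdges S, g e = false := by
  constructor
  · intro hclosed e he
    obtain ⟨u, hu, v, hv, rfl⟩ := mem_boundaryEdges.1 he
    by_contra hg
    exact hv (hclosed u hu v ⟨fun huv => hv (huv ▸ hu), Bool.not_eq_false _ ▸ hg⟩)
  · rintro hbdry u hu v ⟨-, huv⟩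
    by_contra hv
    simp [hbdry _ (mem_boundaryEdges.2 ⟨u, hu, v, hv, rfl⟩)] at huv

end ComponentCopies

section Moments

variable {n ℓ : ℕ} {t : SimpleGraph (Fin ℓ)} {p : ℝ} {S T : Finset (Fin n)}

noncomputable def inducedCopyIndicator (t : SimpleGraph (Fin ℓ)) (S : Finset (Fin n))
    (g : Sym2 (Fin n) → Bool) : ℝ :=
  if ∃ φ : Fin ℓ ↪ Fin n, Set.range φ = ↑S ∧ ∀ i j, t.Adj i j ↔ (graphOf g).Adj (φ i) (φ j)
  then 1 else 0

noncomputable def compIndicator (t : SimpleGraph (Fin ℓ)) (S : Finset (Fin n))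
    (g : Sym2 (Fin n) → Bool) : ℝ :=
  if IsCompCopy t (graphOf g) S then 1 else 0

noncomputable def compCount (t : SimpleGraph (Fin ℓ)) (g : Sym2 (Fin n) → Bool) : ℝ :=
  ∑ S ∈ powersetCard ℓ univ, compIndicator t S g

lemma compIndicator_nonneg (t : SimpleGraph (Fin ℓ)) (S : Finset (Fin n))
    (g : Sym2 (Fin n) → Bool) : 0 ≤ compIndicator t S g := by
  unfold compIndicator; split <;> norm_num

lemma compCount_nonneg (t : SimpleGraph (Fin ℓ)) (g : Sym2 (Fin n) → Bool) : 0 ≤ compCount t g :=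
  sum_nonneg fun S _ => compIndicator_nonneg t S g

lemma natCard_isCompCopy_eq_compCount (t : SimpleGraph (Fin ℓ)) (g : Sym2 (Fin n) → Bool) :
    (Nat.card {S : Finset (Fin n) // IsCompCopy t (graphOf g) S} : ℝ) = compCount t g := by
  rw [Nat.card_eq_fintype_card, Fintype.card_subtype, natCast_card_filter, compCount]
  refine (sum_subset (subset_univ _) fun S _ hS => ?_).symm
  rw [if_neg fun h => hS (mem_powersetCard_univ.2 h.card_eq)]

lemma compIndicator_eq_mul (t : SimpleGraph (Fin ℓ)) (S : Finset (Fin n))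
    (g : Sym2 (Fin n) → Bool) :
    compIndicator t S g =
      inducedCopyIndicator t S g * cylinderIndicator (boundaryEdges S) (fun _ => false) g := by
  rw [compIndicator, inducedCopyIndicator, cylinderIndicator, ite_zero_mul_ite_zero, mul_one]
  exact if_congr (and_congr_right' (closed_graphOf_iff g)) rfl rfl

lemma dependsOn_inducedCopyIndicator (t : SimpleGraph (Fin ℓ)) (S : Finset (Fin n)) :
    DependsOn (inducedCopyIndicator t S) S.sym2 := by
  intro g g' hgg'
  have hadj {u v} (hu : u ∈ S) (hv : v ∈ S) : (graphOf g).Adj u v ↔ (graphOf g').Adj u v := by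
    simp only [graphOf, hgg' _ (mk_mem_sym2_iff.2 ⟨hu, hv⟩)]
  simp only [inducedCopyIndicator]
  congr 1
  refine propext (exists_congr fun φ => and_congr_right fun hrange => forall₂_congr fun i j => ?_)
  have hφ (k : Fin ℓ) : φ k ∈ S := by rw [← mem_coe, ← hrange]; exact Set.mem_range_self k
  rw [hadj (hφ i) (hφ j)]

lemma gnpExp_compIndicator (S : Finset (Fin n)) :
    gnpExp n p (compIndicator t S) =
      gnpExp n p (inducedCopyIndicator t S) * (1 - p) ^ #(boundaryEdges S) := by
  rw [show compIndicator t S = _ from funext (compIndicator_eq_mul t S),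
    gnpExp_mul_of_dependsOn (disjoint_sym2_boundaryEdges_self S)
      (dependsOn_inducedCopyIndicator t S) (dependsOn_cylinderIndicator _ _),
    gnpExp_cylinderIndicator]
  simp

lemma gnpExp_compIndicator_mul (hST : Disjoint S T) :
    gnpExp n p (fun g => compIndicator t S g * compIndicator t T g) =
      gnpExp n p (inducedCopyIndicator t S) * gnpExp n p (inducedCopyIndicator t T) *
        (1 - p) ^ #(boundaryEdges S ∪ boundaryEdges T) := by
  have hsplit (g : Sym2 (Fin n) → Bool) : compIndicator t S g * compIndicator t T g =
      inducedCopyIndicator t S g * inducedCopyIndicator t T g *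
        cylinderIndicator (boundaryEdges S ∪ boundaryEdges T) (fun _ => false) g := by
    rw [compIndicator_eq_mul, compIndicator_eq_mul, mul_mul_mul_comm,
      cylinderIndicator_mul_cylinderIndicator (fun _ _ _ => rfl), piecewise_same]
  have hdisj : Disjoint (S.sym2 ∪ T.sym2) (boundaryEdges S ∪ boundaryEdges T) := by
    simp only [disjoint_union_left, disjoint_union_right]
    exact ⟨⟨disjoint_sym2_boundaryEdges_self S, hST.symm.sym2_boundaryEdges⟩,
      ⟨hST.sym2_boundaryEdges, disjoint_sym2_boundaryEdges_self T⟩⟩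
  have hcopies : DependsOn (fun g => inducedCopyIndicator t S g * inducedCopyIndicator t T g)
      ↑(S.sym2 ∪ T.sym2) :=
    coe_union S.sym2 T.sym2 ▸
      (dependsOn_inducedCopyIndicator t S).mul (dependsOn_inducedCopyIndicator t T)
  simp only [hsplit]
  rw [gnpExp_mul_of_dependsOn hdisj hcopies (dependsOn_cylinderIndicator _ _),
    gnpExp_mul_of_dependsOn hST.sym2 (dependsOn_inducedCopyIndicator t S)
      (dependsOn_inducedCopyIndicator t T), gnpExp_cylinderIndicator]
  simp

/-- `E[Y_S] E[Y_T] = E[Y_S Y_T] (1 - p)^d`, where `d ≤ #S * #T` counts the edges between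
`S` and `T`. -/
lemma gnpExp_compIndicator_mul_le_of_disjoint (hp0 : 0 ≤ p) (hp1 : p ≤ 1)
    (hST : Disjoint S T) :
    gnpExp n p (fun g => compIndicator t S g * compIndicator t T g) ≤
      gnpExp n p (compIndicator t S) * gnpExp n p (compIndicator t T) +
        #S * #T * p * gnpExp n p (fun g => compIndicator t S g * compIndicator t T g) := by
  set Y := gnpExp n p (fun g => compIndicator t S g * compIndicator t T g)
  set d := #(boundaryEdges S ∩ boundaryEdges T)
  have hY : 0 ≤ Y := gnpExp_nonneg hp0 hp1 fun g =>
    mul_nonneg (compIndicator_nonneg _ _ _) (compIndicator_nonneg _ _ _)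
  have hfactor :
      gnpExp n p (compIndicator t S) * gnpExp n p (compIndicator t T) = Y * (1 - p) ^ d := by
    have hpow : (1 - p) ^ #(boundaryEdges S) * (1 - p) ^ #(boundaryEdges T) =
        (1 - p) ^ #(boundaryEdges S ∪ boundaryEdges T) * (1 - p) ^ d := by
      rw [← pow_add, ← pow_add, card_union_add_card_inter]
    rw [show Y = _ from gnpExp_compIndicator_mul hST, gnpExp_compIndicator, gnpExp_compIndicator]
    linear_combination
      gnpExp n p (inducedCopyIndicator t S) * gnpExp n p (inducedCopyIndicator t T) * hpow
  have hbernoulli : 1 - d * p ≤ (1 - p) ^ d := by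
    simpa [← sub_eq_add_neg] using one_add_mul_le_pow (a := -p) (by linarith) d
  have hd : (d : ℝ) ≤ #S * #T := by exact_mod_cast card_boundaryEdges_inter_le hST
  nlinarith [mul_le_mul_of_nonneg_left hbernoulli hY,
    mul_le_mul_of_nonneg_right hd (mul_nonneg hp0 hY)]

end Moments

section SecondMoment

variable {n ℓ : ℕ} {t : SimpleGraph (Fin ℓ)} {p : ℝ}

lemma compIndicator_mul_self (S : Finset (Fin n)) (g : Sym2 (Fin n) → Bool) :
    compIndicator t S g * compIndicator t S g = compIndicator t S g := by
  unfold compIndicator; split <;> norm_num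

lemma compIndicator_mul_eq_zero (ht : t.Connected) {S T : Finset (Fin n)} (hne : S ≠ T)
    (hST : ¬Disjoint S T) (g : Sym2 (Fin n) → Bool) :
    compIndicator t S g * compIndicator t T g = 0 := by
  rw [compIndicator, compIndicator, ite_zero_mul_ite_zero, if_neg]
  rintro ⟨hS, hT⟩
  exact hne (hS.eq_of_not_disjoint ht hT hST)

lemma gnpExp_compIndicator_mul_le (ht : t.Connected) (hp0 : 0 ≤ p) (hp1 : p ≤ 1)
    {S T : Finset (Fin n)} (hS : #S = ℓ) (hT : #T = ℓ) :
    gnpExp n p (fun g => compIndicator t S g * compIndicator t T g) ≤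
      (if S = T then gnpExp n p (compIndicator t S) else 0) +
        gnpExp n p (compIndicator t S) * gnpExp n p (compIndicator t T) +
          ℓ ^ 2 * p * gnpExp n p (fun g => compIndicator t S g * compIndicator t T g) := by
  have hY (S) : 0 ≤ gnpExp n p (compIndicator t S) :=
    gnpExp_nonneg hp0 hp1 (compIndicator_nonneg t S)
  have hYY :
      0 ≤ ℓ ^ 2 * p * gnpExp n p (fun g => compIndicator t S g * compIndicator t T g) := by
    have := gnpExp_nonneg hp0 hp1 fun g =>
      mul_nonneg (compIndicator_nonneg t S g) (compIndicator_nonneg t T g)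
    positivity
  by_cases hST : S = T
  · subst hST
    simp only [compIndicator_mul_self, if_true] at hYY ⊢
    nlinarith [hY S]
  rw [if_neg hST, zero_add]
  by_cases hdisj : Disjoint S T
  · have hle := gnpExp_compIndicator_mul_le_of_disjoint (t := t) hp0 hp1 hdisj
    rw [hS, hT] at hle
    linarith
  · simp only [compIndicator_mul_eq_zero ht hST hdisj, gnpExp_const, mul_zero, add_zero]
    exact mul_nonneg (hY S) (hY T)

lemma gnpExp_compCount_sq_le (ht : t.Connected) (hp0 : 0 ≤ p) (hp1 : p ≤ 1) :
    gnpExp n p (fun g => compCount t g ^ 2) ≤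
      gnpExp n p (compCount t) + gnpExp n p (compCount t) ^ 2 +
        ℓ ^ 2 * p * gnpExp n p (fun g => compCount t g ^ 2) := by
  set 𝒮 := powersetCard ℓ (univ : Finset (Fin n))
  set Y := fun S => gnpExp n p (compIndicator t S)
  set YY := fun S T => gnpExp n p (fun g => compIndicator t S g * compIndicator t T g)
  have hmean : gnpExp n p (compCount t) = ∑ S ∈ 𝒮, Y S := gnpExp_sum _ _
  have hsq : gnpExp n p (fun g => compCount t g ^ 2) = ∑ S ∈ 𝒮, ∑ T ∈ 𝒮, YY S T := by
    simp only [compCount, sq, sum_mul_sum, gnpExp_sum, 𝒮, YY]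
  have hdiag : ∑ S ∈ 𝒮, ∑ T ∈ 𝒮, (if S = T then Y S else 0) = ∑ S ∈ 𝒮, Y S :=
    sum_congr rfl fun S hS => by rw [sum_ite_eq, if_pos hS]
  calc gnpExp n p (fun g => compCount t g ^ 2)
      = ∑ S ∈ 𝒮, ∑ T ∈ 𝒮, YY S T := hsq
    _ ≤ ∑ S ∈ 𝒮, ∑ T ∈ 𝒮, ((if S = T then Y S else 0) + Y S * Y T + ℓ ^ 2 * p * YY S T) :=
      sum_le_sum fun S hS => sum_le_sum fun T hT => gnpExp_compIndicator_mul_le ht hp0 hp1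
        (mem_powersetCard_univ.1 hS) (mem_powersetCard_univ.1 hT)
    _ = _ := by
      rw [hmean, hsq, sq (∑ S ∈ 𝒮, Y S), sum_mul_sum]
      simp only [sum_add_distrib, hdiag, mul_sum]

lemma gnpExp_compCount_variance_le (ht : t.Connected) (hp0 : 0 ≤ p) (hp1 : p ≤ 1)
    (hq : ℓ ^ 2 * p ≤ 1 / 2) :
    gnpExp n p (fun g => compCount t g ^ 2) - gnpExp n p (compCount t) ^ 2 ≤
      2 * gnpExp n p (compCount t) + 2 * (ℓ ^ 2 * p) * gnpExp n p (compCount t) ^ 2 := by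
  have hsq := gnpExp_compCount_sq_le (n := n) ht hp0 hp1
  have hmean := gnpExp_nonneg hp0 hp1 (compCount_nonneg (n := n) t)
  have hq0 : 0 ≤ (ℓ : ℝ) ^ 2 * p := by positivity
  have hsq' : gnpExp n p (fun g => compCount t g ^ 2) ≤
      2 * (gnpExp n p (compCount t) + gnpExp n p (compCount t) ^ 2) := by
    nlinarith [gnpExp_nonneg hp0 hp1 fun g => sq_nonneg (compCount (n := n) t g)]
  nlinarith [mul_le_mul_of_nonneg_left hsq' hq0, mul_le_mul_of_nonneg_right hq hmean]

lemma gnpProb_compCount_deviation_le (ht : t.Connected) (hp0 : 0 ≤ p) (hp1 : p ≤ 1)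
    (hq : ℓ ^ 2 * p ≤ 1 / 2) (hE : 0 < gnpExp n p (compCount t)) {ε : ℝ} (hε : 0 < ε) :
    gnpProb n p (fun g => ε < |compCount t g / gnpExp n p (compCount t) - 1|) ≤
      (2 / gnpExp n p (compCount t) + 2 * (ℓ ^ 2 * p)) / ε ^ 2 := by
  set E := gnpExp n p (compCount t)
  calc _ ≤ (gnpExp n p (fun g => compCount t g ^ 2) - E ^ 2) / (ε * E) ^ 2 :=
        gnpProb_lt_abs_div_sub_one_le hp0 hp1 hE hε
    _ ≤ (2 * E + 2 * (ℓ ^ 2 * p) * E ^ 2) / (ε * E) ^ 2 := by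
        gcongr
        exact gnpExp_compCount_variance_le ht hp0 hp1 hq
    _ = (2 / E + 2 * (ℓ ^ 2 * p)) / ε ^ 2 := by
        field_simp

end SecondMoment

section FirstMoment

variable {n ℓ : ℕ} {t : SimpleGraph (Fin ℓ)} {p : ℝ} {S : Finset (Fin n)}

def incidentEdges (S : Finset (Fin n)) : Finset (Sym2 (Fin n)) :=
  (S ×ˢ univ).image Sym2.mk.uncurry

lemma card_incidentEdges_le (S : Finset (Fin n)) : #(incidentEdges S) ≤ #S * n :=
  card_image_le.trans_eq (by rw [card_product, card_univ, Fintype.card_fin])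

lemma isCompCopy_of_agree {φ : Fin ℓ ↪ Fin n} (hrange : Set.range φ = S)
    {g : Sym2 (Fin n) → Bool}
    (hagree : ∀ e ∈ incidentEdges S, g e = decide (e ∈ t.edgeFinset.map φ.sym2Map)) :
    IsCompCopy t (graphOf g) S := by
  have hφ (k : Fin ℓ) : φ k ∈ S := by rw [← mem_coe, ← hrange]; exact Set.mem_range_self k
  have hedge {u : Fin n} (hu : u ∈ S) (v : Fin n) :
      g s(u, v) = true ↔ s(u, v) ∈ t.edgeFinset.map φ.sym2Map := by
    rw [hagree s(u, v) (mem_image.2 ⟨(u, v), mem_product.2 ⟨hu, mem_univ v⟩, rfl⟩),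
      decide_eq_true_iff]
  refine ⟨⟨φ, hrange, fun i j => ?_⟩, fun u hu v ⟨_, huv⟩ => ?_⟩
  · change t.Adj i j ↔ φ i ≠ φ j ∧ g s(φ i, φ j) = true
    rw [hedge (hφ i), ← Sym2.map_mk, ← Function.Embedding.sym2Map_apply, Finset.mem_map',
      SimpleGraph.mem_edgeFinset, SimpleGraph.mem_edgeSet]
    exact ⟨fun h => ⟨φ.injective.ne h.ne, h⟩, And.right⟩
  · obtain ⟨e, -, he⟩ := mem_map.1 ((hedge hu v).1 huv)
    have hv : v ∈ Sym2.map φ e := by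
      rw [← Function.Embedding.sym2Map_apply, he]; exact Sym2.mem_mk_right u v
    obtain ⟨k, -, rfl⟩ := Sym2.mem_map.1 hv
    exact hφ k

lemma gnpExp_compIndicator_ge (hp0 : 0 ≤ p) (hp1 : p ≤ 1) (hS : #S = ℓ) :
    p ^ #t.edgeFinset * (1 - p) ^ (ℓ * n) ≤ gnpExp n p (compIndicator t S) := by
  set φ : Fin ℓ ↪ Fin n := (S.orderEmbOfFin hS).toEmbedding
  set a : Sym2 (Fin n) → Bool := fun e => decide (e ∈ t.edgeFinset.map φ.sym2Map)
  set A := incidentEdges S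
  have htrue : #(A.filter fun e => a e) ≤ #t.edgeFinset := by
    refine (card_le_card fun e he => ?_).trans (card_map φ.sym2Map).le
    simpa [a] using (mem_filter.1 he).2
  have hfalse : #(A.filter fun e => ¬a e) ≤ ℓ * n :=
    (card_filter_le _ _).trans (hS ▸ card_incidentEdges_le S)
  have hcyl (g : Sym2 (Fin n) → Bool) : cylinderIndicator A a g ≤ compIndicator t S g := by
    unfold cylinderIndicator
    split_ifs with hagree
    · rw [compIndicator, if_pos (isCompCopy_of_agree (S.range_orderEmbOfFin hS) hagree)]
    · exact compIndicator_nonneg t S g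
  calc p ^ #t.edgeFinset * (1 - p) ^ (ℓ * n)
      ≤ p ^ #(A.filter fun e => a e) * (1 - p) ^ #(A.filter fun e => ¬a e) :=
        mul_le_mul (pow_le_pow_of_le_one hp0 hp1 htrue)
          (pow_le_pow_of_le_one (by linarith) (by linarith) hfalse) (by positivity) (by positivity)
    _ = gnpExp n p (cylinderIndicator A a) := by
        rw [gnpExp_cylinderIndicator, prod_ite, prod_const, prod_const]
    _ ≤ gnpExp n p (compIndicator t S) := gnpExp_mono hp0 hp1 hcyl

lemma gnpExp_compCount_ge (hp0 : 0 ≤ p) (hp1 : p ≤ 1) :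
    n.choose ℓ * (p ^ #t.edgeFinset * (1 - p) ^ (ℓ * n)) ≤ gnpExp n p (compCount t) :=
  calc n.choose ℓ * (p ^ #t.edgeFinset * (1 - p) ^ (ℓ * n))
      = #(powersetCard ℓ (univ : Finset (Fin n))) • (p ^ #t.edgeFinset * (1 - p) ^ (ℓ * n)) := by
        rw [card_powersetCard, card_univ, Fintype.card_fin, nsmul_eq_mul]
    _ ≤ ∑ S ∈ powersetCard ℓ univ, gnpExp n p (compIndicator t S) :=
        card_nsmul_le_sum _ _ _ fun S hS =>
          gnpExp_compIndicator_ge hp0 hp1 (mem_powersetCard_univ.1 hS)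
    _ = gnpExp n p (compCount t) := (gnpExp_sum _ _).symm

end FirstMoment

section Asymptotics

open Asymptotics

lemma tendsto_gnpProb_le_of_concentration {p : ℕ → ℝ} (hp : ∀ᶠ n in atTop, 0 ≤ p n ∧ p n ≤ 1)
    {f : ∀ n, (Sym2 (Fin n) → Bool) → ℝ}
    (hE : Tendsto (fun n => gnpExp n (p n) (f n)) atTop atTop)
    (hconc : Tendsto (fun n => gnpProb n (p n)
      (fun g => 1 / 2 < |f n g / gnpExp n (p n) (f n) - 1|)) atTop (𝓝 0)) (k : ℝ) :
    Tendsto (fun n => gnpProb n (p n) (fun g => k ≤ f n g)) atTop (𝓝 1) := by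
  refine tendsto_of_tendsto_of_tendsto_of_le_of_le' (by simpa using hconc.const_sub 1)
    tendsto_const_nhds ?_ ?_
  · filter_upwards [hp, hE.eventually_ge_atTop (2 * k), hE.eventually_gt_atTop 0]
      with n ⟨hp0, hp1⟩ hk hpos
    have hcover (g : Sym2 (Fin n) → Bool) :
        k ≤ f n g ∨ 1 / 2 < |f n g / gnpExp n (p n) (f n) - 1| := by
      by_contra! h
      have hhalf := (abs_le.1 h.2).1
      rw [le_sub_iff_add_le, le_div_iff₀ hpos] at hhalf
      linarith [h.1]
    linarith [one_le_gnpProb_add hp0 hp1 hcover]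
  · filter_upwards [hp] with n ⟨hp0, hp1⟩ using gnpProb_le_one hp0 hp1 _

lemma tendsto_choose_mul_div_pow_mul_one_sub_div_pow_atTop {c : ℝ} (hc : 0 < c) (m k : ℕ) :
    Tendsto (fun n : ℕ => (n.choose (m + 1) : ℝ) * ((c / n) ^ m * (1 - c / n) ^ (k * n)))
      atTop atTop := by
  have hexp : Tendsto (fun n : ℕ => (1 - c / n) ^ (k * n)) atTop (𝓝 (Real.exp (-c) ^ k)) :=
    ((Real.tendsto_one_add_div_pow_exp (-c)).pow k).congr fun n => by
      rw [pow_mul', neg_div, ← sub_eq_add_neg]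
  have hequiv :
      (fun n : ℕ => (n.choose (m + 1) : ℝ) * ((c / n) ^ m * (1 - c / n) ^ (k * n))) ~[atTop]
      fun n : ℕ => (n ^ (m + 1) / (m + 1).factorial : ℝ) * ((c / n) ^ m * Real.exp (-c) ^ k) :=
    (isEquivalent_choose (m + 1)).mul
      (IsEquivalent.refl.mul ((isEquivalent_const_iff_tendsto (by positivity)).2 hexp))
  refine hequiv.symm.tendsto_atTop ?_
  have hK : 0 < c ^ m * Real.exp (-c) ^ k / (m + 1).factorial := by positivity
  refine (tendsto_natCast_atTop_atTop.const_mul_atTop hK).congr' ?_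
  filter_upwards [eventually_ne_atTop 0] with n hn
  have hn' : (n : ℝ) ≠ 0 := Nat.cast_ne_zero.2 hn
  rw [div_pow, pow_succ]
  field_simp

variable {ℓ : ℕ} {t : SimpleGraph (Fin ℓ)} {c : ℝ}

lemma tendsto_gnpExp_compCount_atTop (htree : #t.edgeFinset + 1 = ℓ) (hc : 0 < c) :
    Tendsto (fun n : ℕ => gnpExp n (c / n) (compCount t)) atTop atTop := by
  obtain ⟨m, rfl⟩ : ∃ m, ℓ = m + 1 := Nat.exists_eq_add_one.2 (by omega)
  have hm : #t.edgeFinset = m := by omega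
  refine tendsto_atTop_mono' _ ?_
    (tendsto_choose_mul_div_pow_mul_one_sub_div_pow_atTop hc m (m + 1))
  filter_upwards [(tendsto_const_div_atTop_nhds_zero_nat c).eventually (ge_mem_nhds one_pos)]
    with n hn
  simpa only [hm] using gnpExp_compCount_ge (t := t) (by positivity) hn

lemma tendsto_gnpProb_compCount_deviation (ht : t.Connected) (htree : #t.edgeFinset + 1 = ℓ)
    (hc : 0 < c) {ε : ℝ} (hε : 0 < ε) :
    Tendsto (fun n : ℕ => gnpProb n (c / n)
      (fun g => ε < |compCount t g / gnpExp n (c / n) (compCount t) - 1|)) atTop (𝓝 0) := by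
  have hE := tendsto_gnpExp_compCount_atTop htree hc
  have hp := tendsto_const_div_atTop_nhds_zero_nat c
  have hq : Tendsto (fun n : ℕ => (ℓ : ℝ) ^ 2 * (c / n)) atTop (𝓝 0) := by
    simpa using hp.const_mul ((ℓ : ℝ) ^ 2)
  have hbound : Tendsto (fun n : ℕ =>
      (2 / gnpExp n (c / n) (compCount t) + 2 * (ℓ ^ 2 * (c / n))) / ε ^ 2) atTop (𝓝 0) := by
    simpa [div_eq_mul_inv] using
      ((hE.inv_tendsto_atTop.const_mul 2).add (hq.const_mul 2)).div_const (ε ^ 2)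
  refine squeeze_zero' ?_ ?_ hbound
  · filter_upwards [hp.eventually (ge_mem_nhds one_pos)] with n hn
    exact gnpProb_nonneg (by positivity) hn _
  · filter_upwards [hp.eventually (ge_mem_nhds one_pos), hq.eventually (ge_mem_nhds one_half_pos),
      hE.eventually_gt_atTop 0] with n hn hqn hEn
    exact gnpProb_compCount_deviation_le ht (by positivity) hn hqn hEn hε

end Asymptotics

/-- for a fixed tree `t` and `c > 0`, the number of components of
`G(n, c/n)` isomorphic to `t`, divided by its expectation, converges to `1` in
probability; in particular, for every fixed `k`, with probability tending to `1`
the graph contains at least `k` components isomorphic to `t`. -/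
theorem gnp_tree_components_concentration (ℓ : ℕ) (hℓ : 1 ≤ ℓ)
    (t : SimpleGraph (Fin ℓ)) (htconn : t.Connected) (htedges : t.edgeSet.ncard = ℓ - 1)
    (c : ℝ) (hc : 0 < c) :
    (∀ ε : ℝ, 0 < ε →
      Tendsto (fun n : ℕ =>
          gnpProb n (c / n) (fun g =>
            ε < |(Nat.card {S : Finset (Fin n) // IsCompCopy t (graphOf g) S} : ℝ) /
                  gnpExp n (c / n)
                    (fun g' => (Nat.card {S : Finset (Fin n) // IsCompCopy t (graphOf g') S} : ℝ))
                - 1|))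
        atTop (𝓝 0)) ∧
    (∀ k : ℕ,
      Tendsto (fun n : ℕ =>
          gnpProb n (c / n) (fun g =>
            k ≤ Nat.card {S : Finset (Fin n) // IsCompCopy t (graphOf g) S}))
        atTop (𝓝 1)) := by
  have htree : #t.edgeFinset + 1 = ℓ := by
    rw [SimpleGraph.edgeFinset, ← Set.ncard_eq_toFinset_card', htedges]
    omega
  have hp : ∀ᶠ n : ℕ in atTop, 0 ≤ c / n ∧ c / n ≤ 1 :=
    ((tendsto_const_div_atTop_nhds_zero_nat c).eventually (ge_mem_nhds one_pos)).mono
      fun n hn => ⟨by positivity, hn⟩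
  have hconc (ε : ℝ) (hε : 0 < ε) := tendsto_gnpProb_compCount_deviation htconn htree hc hε
  simp only [natCard_isCompCopy_eq_compCount, ← Nat.cast_le (α := ℝ)]
  exact ⟨hconc, fun k => tendsto_gnpProb_le_of_concentration hp
    (tendsto_gnpExp_compCount_atTop htree hc) (hconc _ one_half_pos) k⟩
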